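/- arXiv:2402.07036 — 2 statements merged into one kernel-verified Lean document; each statement's English description precedes it below -/
import Mathlib

section
/- Let I ⊆ ℝ be an open interval, g : I → Matₙ(ℝ) twice differentiable with g(u) invertible for all u ∈ I, and m : I → ℝ twice differentiable with m(u) > 0 for all u ∈ I. Define the rescaled tensor g̃ := m⁻²·g and the reparameterized derivative D f := m²·f' (so that D corresponds to d/dU with dU = du/m²). Then on I one has the identity (D g̃)·g̃⁻¹·(D g̃) − 2·D(D g̃) = m²·( g'·g⁻¹·g' − 2·g'' ) + 4·m·m''·g, and consequently tr( g̃⁻¹·(D g̃)·g̃⁻¹·(D g̃) − 2·g̃⁻¹·D(D g̃) ) = 4·m³·( m·P(u) + n·m''(u) ), where P(u) := tr( (1/4)·g(u)⁻¹·g'(u)·g(u)⁻¹·g'(u) − (1/2)·g(u)⁻¹·g''(u) ). In particular, the left-hand trace vanishes identically on I if and only if n·m''(u) + P(u)·m(u) = 0 on I. -/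
/-!
Write `c = m'/m`. Then `D g̃ = g' - 2c g`, `D(D g̃) = m²(g'' - 2c' g - 2c g')` and `g̃⁻¹ = m² g⁻¹`.
Expanding `(D g̃) g̃⁻¹ (D g̃) - 2 D(D g̃)`, the `c g'` terms cancel and `g` is left with the
coefficient `4m²(c² + c') = 4 m m''`. Multiplying by `g̃⁻¹` and taking traces, `tr(g⁻¹ g) = n`
produces the `n m''` term, and `4m³ ≠ 0` gives the vacuum equivalence.
-/

open Matrix Set

attribute [local instance] Matrix.frobeniusNormedAddCommGroup Matrix.frobeniusNormedSpace

/-- The conformally rescaled tensor `g̃ = m⁻² g`. -/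
noncomputable def rescaledTensor {n : ℕ} (m : ℝ → ℝ) (g : ℝ → Matrix (Fin n) (Fin n) ℝ) :
    ℝ → Matrix (Fin n) (Fin n) ℝ :=
  fun u => (m u ^ 2)⁻¹ • g u

/-- The reparameterized derivative `D f = m² f'` (corresponding to `d/dU` with `dU = du/m²`). -/
noncomputable def Dop {n : ℕ} (m : ℝ → ℝ) (f : ℝ → Matrix (Fin n) (Fin n) ℝ) :
    ℝ → Matrix (Fin n) (Fin n) ℝ :=
  fun u => m u ^ 2 • deriv f u

/-- The Ricci coefficient `P(u) = tr((1/4) g⁻¹g'g⁻¹g' − (1/2) g⁻¹g'')` of a Rosen plane wave. -/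
noncomputable def ricciCoeff {n : ℕ} (g g' g'' : ℝ → Matrix (Fin n) (Fin n) ℝ) : ℝ → ℝ :=
  fun u => ((1/4 : ℝ) • ((g u)⁻¹ * g' u * (g u)⁻¹ * g' u) -
    (1/2 : ℝ) • ((g u)⁻¹ * g'' u)).trace

section ConformalAlgebra

variable {𝕜 R : Type*} [CommRing 𝕜] [Ring R] [Algebra 𝕜 R]

theorem conformal_sandwich_identity {A A' A'' B : R} (hAB : A * B = 1) (hBA : B * A = 1)
    (p c d : 𝕜) :
    (A' - (2 * c) • A) * (p • B) * (A' - (2 * c) • A)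
        - (2 : 𝕜) • (p • (A'' - (2 * d) • A - (2 * c) • A'))
      = p • (A' * B * A' - (2 : 𝕜) • A'') + (4 * p * (c ^ 2 + d)) • A := by
  have h₁ : A' * B * A = A' := by rw [mul_assoc, hBA, mul_one]
  have h₂ : A * B * A' = A' := by rw [hAB, one_mul]
  have h₃ : A * B * A = A := by rw [hAB, one_mul]
  simp only [sub_mul, mul_sub, smul_mul_assoc, mul_smul_comm, smul_smul, h₁, h₂, h₃]
  module

theorem mul_mul_mul_sub_smul_mul (S X Y : R) (c : 𝕜) :
    S * X * S * X - c • (S * Y) = S * (X * S * X - c • Y) := by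
  simp only [mul_sub, mul_smul_comm, mul_assoc]

end ConformalAlgebra

section ConformalRescaling

variable {n : ℕ} {m m' : ℝ → ℝ} {g g' : ℝ → Matrix (Fin n) (Fin n) ℝ} {u : ℝ}

theorem rescaledTensor_inv (hg : IsUnit (g u)) (hm : m u ≠ 0) :
    (rescaledTensor m g u)⁻¹ = m u ^ 2 • (g u)⁻¹ := by
  have hdet : IsUnit (g u).det := (isUnit_iff_isUnit_det _).mp hg
  refine inv_eq_right_inv ?_
  rw [rescaledTensor, smul_mul_smul_comm, inv_mul_cancel₀ (pow_ne_zero 2 hm),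
    mul_nonsing_inv _ hdet, one_smul]

theorem Dop_apply_of_hasDerivAt {f : ℝ → Matrix (Fin n) (Fin n) ℝ} {F : Matrix (Fin n) (Fin n) ℝ}
    (hf : HasDerivAt f F u) : Dop m f u = m u ^ 2 • F :=
  congrArg (m u ^ 2 • ·) hf.deriv

theorem Dop_rescaledTensor {G : Matrix (Fin n) (Fin n) ℝ} {M : ℝ} (hg : HasDerivAt g G u)
    (hm : HasDerivAt m M u) (hmu : m u ≠ 0) :
    Dop m (rescaledTensor m g) u = G - (2 * (M / m u)) • g u := by
  have hder : HasDerivAt (rescaledTensor m g) _ u := ((hm.pow 2).inv (pow_ne_zero 2 hmu)).smul hg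
  rw [Dop_apply_of_hasDerivAt hder, Pi.inv_apply, Pi.pow_apply]
  match_scalars <;> field_simp
  ring

theorem Dop_Dop_rescaledTensor {s : Set ℝ} (hs : IsOpen s) (hg : ∀ v ∈ s, HasDerivAt g (g' v) v)
    (hm : ∀ v ∈ s, HasDerivAt m (m' v) v) (hm₀ : ∀ v ∈ s, m v ≠ 0) (hu : u ∈ s)
    {G'' : Matrix (Fin n) (Fin n) ℝ} {M'' : ℝ} (hg' : HasDerivAt g' G'' u)
    (hm' : HasDerivAt m' M'' u) :
    Dop m (Dop m (rescaledTensor m g)) u = m u ^ 2 •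
      (G'' - (2 * ((M'' * m u - m' u * m' u) / m u ^ 2)) • g u - (2 * (m' u / m u)) • g' u) := by
  have hD : Dop m (rescaledTensor m g) =ᶠ[nhds u] fun v => g' v - (2 * (m' v / m v)) • g v :=
    Filter.eventually_of_mem (hs.mem_nhds hu) fun v hv =>
      Dop_rescaledTensor (hg v hv) (hm v hv) (hm₀ v hv)
  have hderiv := hg'.sub ((((hm'.div (hm u hu) (hm₀ u hu)).const_mul 2)).smul (hg u hu))
  rw [Dop_apply_of_hasDerivAt (hderiv.congr_of_eventuallyEq hD), Pi.div_apply]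
  module

theorem trace_conformal_sandwich {A A' A'' B : Matrix (Fin n) (Fin n) ℝ} (hBA : B * A = 1)
    (p r : ℝ) :
    ((p ^ 2 • B) * (p ^ 2 • (A' * B * A' - (2 : ℝ) • A'') + (4 * p * r) • A)).trace
      = 4 * p ^ 3 *
        (p * ((1/4 : ℝ) • (B * A' * B * A') - (1/2 : ℝ) • (B * A'')).trace + n * r) := by
  simp only [mul_add, mul_sub, mul_smul_comm, smul_mul_assoc, smul_smul, ← mul_assoc, hBA,
    trace_add, trace_sub, trace_smul, trace_one, Fintype.card_fin, smul_eq_mul]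
  ring

end ConformalRescaling

/-- the conformal rescaling identity for the Ricci coefficient of a Rosen
plane wave: with `g̃ = m⁻²g` and `D = m² d/du`, one has
`(Dg̃)g̃⁻¹(Dg̃) − 2D(Dg̃) = m²(g'g⁻¹g' − 2g'') + 4mm''g`, hence
`tr(g̃⁻¹(Dg̃)g̃⁻¹(Dg̃) − 2g̃⁻¹D(Dg̃)) = 4m³(mP + nm'')`, and the latter vanishes identically
iff `n m'' + P m = 0` on the interval. -/
theorem conformal_vacuum_condition {n : ℕ} (a b : ℝ)
    (g g' g'' : ℝ → Matrix (Fin n) (Fin n) ℝ) (m m' m'' : ℝ → ℝ)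
    (hg : ∀ u ∈ Set.Ioo a b, HasDerivAt g (g' u) u)
    (hg' : ∀ u ∈ Set.Ioo a b, HasDerivAt g' (g'' u) u)
    (hginv : ∀ u ∈ Set.Ioo a b, IsUnit (g u))
    (hm : ∀ u ∈ Set.Ioo a b, HasDerivAt m (m' u) u)
    (hm' : ∀ u ∈ Set.Ioo a b, HasDerivAt m' (m'' u) u)
    (hmpos : ∀ u ∈ Set.Ioo a b, 0 < m u) :
    (∀ u ∈ Set.Ioo a b,
      Dop m (rescaledTensor m g) u * (rescaledTensor m g u)⁻¹ * Dop m (rescaledTensor m g) u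
          - (2 : ℝ) • Dop m (Dop m (rescaledTensor m g)) u
        = m u ^ 2 • (g' u * (g u)⁻¹ * g' u - (2 : ℝ) • g'' u) + (4 * m u * m'' u) • g u) ∧
    (∀ u ∈ Set.Ioo a b,
      ((rescaledTensor m g u)⁻¹ * Dop m (rescaledTensor m g) u *
          (rescaledTensor m g u)⁻¹ * Dop m (rescaledTensor m g) u
        - (2 : ℝ) • ((rescaledTensor m g u)⁻¹ * Dop m (Dop m (rescaledTensor m g)) u)).trace
        = 4 * m u ^ 3 * (m u * ricciCoeff g g' g'' u + (n : ℝ) * m'' u)) ∧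
    ((∀ u ∈ Set.Ioo a b,
      ((rescaledTensor m g u)⁻¹ * Dop m (rescaledTensor m g) u *
          (rescaledTensor m g u)⁻¹ * Dop m (rescaledTensor m g) u
        - (2 : ℝ) • ((rescaledTensor m g u)⁻¹ * Dop m (Dop m (rescaledTensor m g)) u)).trace
        = 0) ↔
     (∀ u ∈ Set.Ioo a b, (n : ℝ) * m'' u + ricciCoeff g g' g'' u * m u = 0)) := by
  have hm₀ : ∀ u ∈ Set.Ioo a b, m u ≠ 0 := fun u hu => (hmpos u hu).ne'
  have hdet : ∀ u ∈ Set.Ioo a b, IsUnit (g u).det := fun u hu =>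
    (isUnit_iff_isUnit_det _).mp (hginv u hu)
  have H₁ : ∀ u ∈ Set.Ioo a b,
      Dop m (rescaledTensor m g) u * (rescaledTensor m g u)⁻¹ * Dop m (rescaledTensor m g) u
          - (2 : ℝ) • Dop m (Dop m (rescaledTensor m g)) u
        = m u ^ 2 • (g' u * (g u)⁻¹ * g' u - (2 : ℝ) • g'' u) + (4 * m u * m'' u) • g u := by
    intro u hu
    rw [Dop_rescaledTensor (hg u hu) (hm u hu) (hm₀ u hu),
      Dop_Dop_rescaledTensor isOpen_Ioo hg hm hm₀ hu (hg' u hu) (hm' u hu),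
      rescaledTensor_inv (hginv u hu) (hm₀ u hu),
      conformal_sandwich_identity (mul_nonsing_inv _ (hdet u hu)) (nonsing_inv_mul _ (hdet u hu))]
    congr 2
    field_simp [hm₀ u hu]
    ring
  have H₂ : ∀ u ∈ Set.Ioo a b,
      ((rescaledTensor m g u)⁻¹ * Dop m (rescaledTensor m g) u *
          (rescaledTensor m g u)⁻¹ * Dop m (rescaledTensor m g) u
        - (2 : ℝ) • ((rescaledTensor m g u)⁻¹ * Dop m (Dop m (rescaledTensor m g)) u)).trace
        = 4 * m u ^ 3 * (m u * ricciCoeff g g' g'' u + (n : ℝ) * m'' u) := by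
    intro u hu
    rw [mul_mul_mul_sub_smul_mul, H₁ u hu, rescaledTensor_inv (hginv u hu) (hm₀ u hu),
      trace_conformal_sandwich (nonsing_inv_mul _ (hdet u hu)), ricciCoeff]
  refine ⟨H₁, H₂, forall₂_congr fun u hu => ?_⟩
  rw [H₂ u hu, mul_eq_zero, or_iff_right (by have := hmpos u hu; positivity)]
  ring_nf
end

section
/- Let I ⊆ ℝ be an open interval and let p, S, L, H : I → Matₙ(ℝ) be such that: S is differentiable and symmetric-valued with S'(u) + S(u)² + p(u) = 0 on I; L is differentiable with L'(u) = S(u)·L(u) and L(u) invertible on I; H is differentiable with L(u)·H'(u)·L(u)ᵀ = 1 (the identity matrix) on I; and L(u)·H(u)·L(u)ᵀ is invertible on I. Then J(u) := L(u)·H(u) and T(u) := S(u) + ( L(u)·H(u)·L(u)ᵀ )⁻¹ satisfy T'(u) + T(u)² + p(u) = 0 and J'(u) = T(u)·J(u) on I. -/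
open Matrix Set

attribute [local instance] Matrix.frobeniusNormedAddCommGroup Matrix.frobeniusNormedSpace

attribute [local instance] Matrix.frobeniusNormedRing Matrix.frobeniusNormedAlgebra

/-! With `M = L H Lᵀ`, the symmetry of `S` and `L H' Lᵀ = 1` give `M' = S M + 1 + M S`, hence
`N = M⁻¹` satisfies `N' = -(N S + N² + S N)`, which is exactly what makes `S + N` solve the
Riccati equation whenever `S` does. For `J = L H` we have `J' = S J + L H'`, and `L H' = M⁻¹ J`
because `Lᵀ (L H') = 1` gives `J = M (L H')`. -/

section NormedRing

variable {𝕜 R : Type*} [NontriviallyNormedField 𝕜] [NormedRing R] [NormedAlgebra 𝕜 R]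
  {f g : 𝕜 → R} {f' : R} {u : 𝕜}

theorem HasDerivAt.ringInverse [HasSummableGeomSeries R] (hf : HasDerivAt f f' u)
    (hu : IsUnit (f u)) :
    HasDerivAt (fun w => Ring.inverse (f w))
      (-(Ring.inverse (f u) * f' * Ring.inverse (f u))) u := by
  obtain ⟨x, hx⟩ := hu
  have hinv := hasFDerivAt_ringInverse (𝕜 := 𝕜) x
  rw [hx] at hinv
  simpa [← hx, Function.comp_def] using hinv.comp_hasDerivAt u hf

theorem HasDerivAt.add_of_riccati {p : R} (hg : HasDerivAt g (-(g u * g u + p)) u)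
    (hf : HasDerivAt f (-(f u * g u + f u * f u + g u * f u)) u) :
    HasDerivAt (fun w => g w + f w) (-((g u + f u) * (g u + f u) + p)) u :=
  (hg.add hf).congr_deriv (by noncomm_ring)

end NormedRing

section Matrix

variable {𝕜 : Type*} {m : Type*} [Fintype m]

theorem HasDerivAt.matrix_transpose [NontriviallyNormedField 𝕜] {n α : Type*} [Fintype n]
    [NormedAddCommGroup α] [NormedSpace 𝕜 α] {f : 𝕜 → Matrix m n α} {f' : Matrix m n α}
    {u : 𝕜} (hf : HasDerivAt f f' u) : HasDerivAt (fun w => (f w)ᵀ) f'ᵀ u :=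
  let transposeCLM : Matrix m n α →L[𝕜] Matrix n m α :=
    (transposeLinearEquiv m n 𝕜 α).toLinearMap.mkContinuous 1 fun A => by
      simp [frobenius_norm_transpose]
  transposeCLM.hasFDerivAt.comp_hasDerivAt u hf

variable [DecidableEq m]

theorem HasDerivAt.matrix_inv [RCLike 𝕜] {f : 𝕜 → Matrix m m 𝕜} {f' : Matrix m m 𝕜} {u : 𝕜}
    (hf : HasDerivAt f f' u) (hu : IsUnit (f u)) :
    HasDerivAt (fun w => (f w)⁻¹) (-((f u)⁻¹ * f' * (f u)⁻¹)) u := by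
  have h := hf.ringInverse hu
  simp only [← nonsing_inv_eq_ringInverse] at h
  exact h

theorem Matrix.inv_mul_mul_eq_of_mul_mul_eq_one [CommRing 𝕜] {X A B Y : Matrix m m 𝕜}
    (hB : X * B * Y = 1) (hA : IsUnit (X * A * Y)) : (X * A * Y)⁻¹ * (X * A) = X * B := by
  calc (X * A * Y)⁻¹ * (X * A) = (X * A * Y)⁻¹ * (X * A * Y * (X * B)) := by
        rw [mul_assoc (X * A) Y (X * B), mul_eq_one_comm.mp hB, mul_one]
    _ = X * B := nonsing_inv_mul_cancel_left _ _ ((isUnit_iff_isUnit_det _).mp hA)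

theorem hasDerivAt_mul_mul_transpose {L H : ℝ → Matrix m m ℝ} {S H' : Matrix m m ℝ} {u : ℝ}
    (hS : Sᵀ = S) (hL : HasDerivAt L (S * L u) u) (hH : HasDerivAt H H' u)
    (hH' : L u * H' * (L u)ᵀ = 1) :
    HasDerivAt (fun w => L w * H w * (L w)ᵀ)
      (S * (L u * H u * (L u)ᵀ) + 1 + L u * H u * (L u)ᵀ * S) u := by
  refine ((hL.mul hH).mul hL.matrix_transpose).congr_deriv ?_
  rw [Pi.mul_apply, transpose_mul, hS, add_mul, hH']
  noncomm_ring

theorem HasDerivAt.matrix_inv_of_eq_mul_add_one_add_mul {M : ℝ → Matrix m m ℝ}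
    {S : Matrix m m ℝ} {u : ℝ} (hM : HasDerivAt M (S * M u + 1 + M u * S) u)
    (hu : IsUnit (M u)) :
    HasDerivAt (fun w => (M w)⁻¹)
      (-((M u)⁻¹ * S + (M u)⁻¹ * (M u)⁻¹ + S * (M u)⁻¹)) u := by
  have hdet := (isUnit_iff_isUnit_det _).mp hu
  refine (hM.matrix_inv hu).congr_deriv ?_
  simp only [mul_add, add_mul, mul_one, mul_assoc, nonsing_inv_mul_cancel_left _ _ hdet,
    mul_nonsing_inv _ hdet]

end Matrix

theorem new_sachs_solution_from_primitive_general {n : ℕ} (a b : ℝ)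
    (p S L H H' : ℝ → Matrix (Fin n) (Fin n) ℝ)
    (hSsym : ∀ u ∈ Set.Ioo a b, (S u)ᵀ = S u)
    (hSachs : ∀ u ∈ Set.Ioo a b, HasDerivAt S (-(S u * S u + p u)) u)
    (hL : ∀ u ∈ Set.Ioo a b, HasDerivAt L (S u * L u) u)
    (hH : ∀ u ∈ Set.Ioo a b, HasDerivAt H (H' u) u)
    (hH' : ∀ u ∈ Set.Ioo a b, L u * H' u * (L u)ᵀ = 1)
    (hLHL : ∀ u ∈ Set.Ioo a b, IsUnit (L u * H u * (L u)ᵀ)) :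
    ∀ u ∈ Set.Ioo a b,
      HasDerivAt (fun w => S w + (L w * H w * (L w)ᵀ)⁻¹)
        (-((S u + (L u * H u * (L u)ᵀ)⁻¹) * (S u + (L u * H u * (L u)ᵀ)⁻¹) + p u)) u ∧
      HasDerivAt (fun w => L w * H w)
        ((S u + (L u * H u * (L u)ᵀ)⁻¹) * (L u * H u)) u := by
  intro u hu
  have hM := hasDerivAt_mul_mul_transpose (hSsym u hu) (hL u hu) (hH u hu) (hH' u hu)
  refine ⟨(hSachs u hu).add_of_riccati
    (hM.matrix_inv_of_eq_mul_add_one_add_mul (hLHL u hu)), ?_⟩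
  refine ((hL u hu).mul (hH u hu)).congr_deriv ?_
  rw [add_mul, inv_mul_mul_eq_of_mul_mul_eq_one (hH' u hu) (hLHL u hu), mul_assoc]

/-- Let `(S, L)` be a solution of the Sachs system (`S' + S² + p = 0`,
`S` symmetric, `L' = S L`, `L` invertible) on an open interval `(a,b)`, and let `H` satisfy
`L H' Lᵀ = 1`, with `L H Lᵀ` invertible.  Then `J = L H` and `T = S + (L H Lᵀ)⁻¹` satisfy
`T' + T² + p = 0` and `J' = T J`. -/
theorem new_sachs_solution_from_primitive {n : ℕ} (a b : ℝ)
    (p S L H H' : ℝ → Matrix (Fin n) (Fin n) ℝ)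
    (hSsym : ∀ u ∈ Set.Ioo a b, (S u)ᵀ = S u)
    (hSachs : ∀ u ∈ Set.Ioo a b, HasDerivAt S (-(S u * S u + p u)) u)
    (hL : ∀ u ∈ Set.Ioo a b, HasDerivAt L (S u * L u) u)
    (hLinv : ∀ u ∈ Set.Ioo a b, IsUnit (L u))
    (hH : ∀ u ∈ Set.Ioo a b, HasDerivAt H (H' u) u)
    (hH' : ∀ u ∈ Set.Ioo a b, L u * H' u * (L u)ᵀ = 1)
    (hLHL : ∀ u ∈ Set.Ioo a b, IsUnit (L u * H u * (L u)ᵀ)) :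
    ∀ u ∈ Set.Ioo a b,
      HasDerivAt (fun w => S w + (L w * H w * (L w)ᵀ)⁻¹)
        (-((S u + (L u * H u * (L u)ᵀ)⁻¹) * (S u + (L u * H u * (L u)ᵀ)⁻¹) + p u)) u ∧
      HasDerivAt (fun w => L w * H w)
        ((S u + (L u * H u * (L u)ᵀ)⁻¹) * (L u * H u)) u :=
  new_sachs_solution_from_primitive_general a b p S L H H' hSsym hSachs hL hH hH' hLHL
end
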